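/- The polynomial p(x,y) = x^19 + 285x^13y^3 + 1425x^11y^4 + 19x^9y^9 + 2679x^9y^5 + 19x^9y + 2508x^7y^6 + 1254x^5y^7 + 285x^3y^8 + 19xy^9 + y^19 satisfies p(x, 1-x) = 1 as a polynomial identity and has exactly 11 nonzero monomials. -/
import Mathlib


open MvPolynomial

noncomputable def p4 : MvPolynomial (Fin 2) ℝ :=
  X 0 ^ 19 + 285 * X 0 ^ 13 * X 1 ^ 3 + 1425 * X 0 ^ 11 * X 1 ^ 4 + 19 * X 0 ^ 9 * X 1 ^ 9
    + 2679 * X 0 ^ 9 * X 1 ^ 5 + 19 * X 0 ^ 9 * X 1 + 2508 * X 0 ^ 7 * X 1 ^ 6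
    + 1254 * X 0 ^ 5 * X 1 ^ 7 + 285 * X 0 ^ 3 * X 1 ^ 8 + 19 * X 0 * X 1 ^ 9 + X 1 ^ 19

noncomputable def dd (a b : ℕ) : Fin 2 →₀ ℕ := Finsupp.single 0 a + Finsupp.single 1 b

lemma dd_inj {a b a' b' : ℕ} : dd a b = dd a' b' ↔ a = a' ∧ b = b' := by
  constructor
  · intro h
    have h0 := DFunLike.congr_fun h 0
    have h1 := DFunLike.congr_fun h 1
    simp [dd, Finsupp.single_apply] at h0 h1
    exact ⟨h0, h1⟩
  · rintro ⟨rfl, rfl⟩; rfl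

lemma term_eq (c : ℝ) (a b : ℕ) :
    (C c : MvPolynomial (Fin 2) ℝ) * X 0 ^ a * X 1 ^ b = monomial (dd a b) c := by
  rw [C_apply, X_pow_eq_monomial, X_pow_eq_monomial, monomial_mul, monomial_mul, dd]
  simp

lemma t1 : (X 0 : MvPolynomial (Fin 2) ℝ) ^ 19 = monomial (dd 19 0) 1 := by
  simpa using term_eq 1 19 0

lemma t2 : (X 1 : MvPolynomial (Fin 2) ℝ) ^ 19 = monomial (dd 0 19) 1 := by
  simpa using term_eq 1 0 19

lemma t3 : (C 19 : MvPolynomial (Fin 2) ℝ) * X 0 ^ 9 * X 1 = monomial (dd 9 1) 19 := by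
  have := term_eq 19 9 1
  rwa [pow_one] at this

lemma t4 : (C 19 : MvPolynomial (Fin 2) ℝ) * X 0 * X 1 ^ 9 = monomial (dd 1 9) 19 := by
  have := term_eq 19 1 9
  rwa [pow_one] at this

lemma p4_eq : p4 = monomial (dd 19 0) 1 + monomial (dd 13 3) 285 + monomial (dd 11 4) 1425
    + monomial (dd 9 9) 19 + monomial (dd 9 5) 2679 + monomial (dd 9 1) 19
    + monomial (dd 7 6) 2508 + monomial (dd 5 7) 1254 + monomial (dd 3 8) 285
    + monomial (dd 1 9) 19 + monomial (dd 0 19) 1 := by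
  rw [p4,
      show (285 : MvPolynomial (Fin 2) ℝ) = C 285 from (map_ofNat C 285).symm,
      show (1425 : MvPolynomial (Fin 2) ℝ) = C 1425 from (map_ofNat C 1425).symm,
      show (19 : MvPolynomial (Fin 2) ℝ) = C 19 from (map_ofNat C 19).symm,
      show (2679 : MvPolynomial (Fin 2) ℝ) = C 2679 from (map_ofNat C 2679).symm,
      show (2508 : MvPolynomial (Fin 2) ℝ) = C 2508 from (map_ofNat C 2508).symm,
      show (1254 : MvPolynomial (Fin 2) ℝ) = C 1254 from (map_ofNat C 1254).symm,
      t1, t2, t3, t4, term_eq, term_eq, term_eq, term_eq, term_eq, term_eq, term_eq]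

lemma step {q : MvPolynomial (Fin 2) ℝ} {s : Finset (Fin 2 →₀ ℕ)} (hq : q.support = s)
    (d : Fin 2 →₀ ℕ) (c : ℝ) (hc : c ≠ 0) (hd : d ∉ s) :
    (q + monomial d c).support = insert d s := by
  have hm : (monomial d c).support = {d} := by rw [support_monomial, if_neg hc]
  have hdisj : Disjoint q.support (monomial d c).support := by
    rw [hq, hm]
    exact Finset.disjoint_singleton_right.mpr hd
  have : (q + monomial d c).support = q.support ∪ (monomial d c).support :=
    Finsupp.support_add_eq hdisj
  rw [this, hq, hm, Finset.union_comm]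
  rfl

lemma supp1 : ((monomial (dd 19 0) (1:ℝ)) : MvPolynomial (Fin 2) ℝ).support = {dd 19 0} := by
  rw [support_monomial, if_neg one_ne_zero]

theorem stmt_4 :
    (∀ x y : ℝ, x + y = 1 → eval ![x, y] p4 = 1) ∧ p4.support.card = 11 := by
  constructor
  · intro x y h
    have hy : y = 1 - x := by linarith
    subst hy
    simp [p4]
    ring_nf
  · have h2 := step supp1 (dd 13 3) 285 (by norm_num) (by simp [dd_inj])
    have h3 := step h2 (dd 11 4) 1425 (by norm_num) (by simp [dd_inj])
    have h4 := step h3 (dd 9 9) 19 (by norm_num) (by simp [dd_inj])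
    have h5 := step h4 (dd 9 5) 2679 (by norm_num) (by simp [dd_inj])
    have h6 := step h5 (dd 9 1) 19 (by norm_num) (by simp [dd_inj])
    have h7 := step h6 (dd 7 6) 2508 (by norm_num) (by simp [dd_inj])
    have h8 := step h7 (dd 5 7) 1254 (by norm_num) (by simp [dd_inj])
    have h9 := step h8 (dd 3 8) 285 (by norm_num) (by simp [dd_inj])
    have h10 := step h9 (dd 1 9) 19 (by norm_num) (by simp [dd_inj])
    have h11 := step h10 (dd 0 19) 1 (by norm_num) (by simp [dd_inj])
    rw [p4_eq, h11]
    simp [Finset.card_insert_of_notMem, dd_inj]
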